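/- Let m, n, k ∈ ℕ, let S be an infinite set of monic polynomials in R = 𝔽_q[x], let N ∈ R with deg N = n, and let P/Q ∈ F^m_{k,S} with k ≤ n. Then the ball B(N·P/Q, q^{−1}) contains exactly one point of R_{<n}^m; moreover, for P/Q, A/B ∈ F^m_{k,S}, the balls B(P/Q, q^{−(n+1)}) and B(A/B, q^{−(n+1)}) are disjoint if and only if the balls B(N·P/Q, q^{−1}) and B(N·A/B, q^{−1}) are disjoint. -/

import Mathlib

open Polynomial MeasureTheory
open scoped Classical ENNReal NNReal

/- Setting: `Fq` is a finite field with `q` elements (`q` a prime power),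
`R = Fq[x]`, and `K_∞ = Fq((x⁻¹))` is realized as the field `LaurentSeries Fq`
of formal Laurent series in the variable `u = x⁻¹`. -/

variable (Fq : Type) [Field Fq] [Fintype Fq] [DecidableEq Fq]

/-- `K_∞ = 𝔽_q((x⁻¹))`, realized as Laurent series in the variable `u = x⁻¹`. -/
abbrev Kinf := LaurentSeries Fq

/-- The embedding of `R = 𝔽_q[x]` into `K_∞`, sending `x` to `u⁻¹`. -/
noncomputable def emb : Polynomial Fq →+* Kinf Fq :=
  (Polynomial.aeval ((HahnSeries.single (-1 : ℤ) (1 : Fq)) : LaurentSeries Fq)).toRingHom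

/-- `q`, as a nonnegative real number. -/
noncomputable def qc : NNReal := (Fintype.card Fq : NNReal)

/-- The absolute value `|α| = q^{-ord(α)}` on `K_∞` (so that `|f| = q^{deg f}` for a nonzero
polynomial `f ∈ 𝔽_q[x]`, since `f(u⁻¹)` has order `-deg f` as a Laurent series in `u`). -/
noncomputable def fabs (α : Kinf Fq) : NNReal :=
  if α = 0 then 0 else (qc Fq) ^ (-(HahnSeries.order α))

/-- The sup norm `‖v‖ = max_i |v_i|` on `K_∞^m`. -/
noncomputable def vnorm {m : ℕ} (v : Fin m → Kinf Fq) : NNReal :=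
  Finset.univ.sup fun i => fabs Fq (v i)

/-- The maximal ideal `𝔪 = {α ∈ K_∞ : |α| ≤ q⁻¹}`. -/
noncomputable def mfrak : Set (Kinf Fq) := {α | fabs Fq α ≤ (qc Fq)⁻¹}

/-- `𝔪^m ⊆ K_∞^m`. -/
noncomputable def mfrakV (m : ℕ) : Set (Fin m → Kinf Fq) := {α | ∀ i, α i ∈ mfrak Fq}

/-- `(P, Q)` is a primitive vector of `R^{m+1}`, i.e. `gcd(P₁, …, P_m, Q) = 1`:
every common divisor is a unit. -/
def Primitive {m : ℕ} (P : Fin m → Polynomial Fq) (Q : Polynomial Fq) : Prop :=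
  ∀ d : Polynomial Fq, d ∣ Q → (∀ i, d ∣ P i) → IsUnit d

/-- The point `P/Q ∈ K_∞^m` determined by `P ∈ R^m` and `Q ∈ R`. -/
noncomputable def ratV {m : ℕ} (P : Fin m → Polynomial Fq) (Q : Polynomial Fq) :
    Fin m → Kinf Fq := fun i => emb Fq (P i) / emb Fq Q

/-- `deg_{min,S}(α, q^{-n})`: the least `d` such that there is `(P,Q) ∈ R̂^{m+1}` with
`Q ∈ S`, `deg Q = d`, `‖P‖ < |Q|` and `‖α - P/Q‖ < q^{-n}`. -/
noncomputable def degMin (S : Set (Polynomial Fq)) (m n : ℕ) (α : Fin m → Kinf Fq) : ℕ :=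
  sInf {d : ℕ | ∃ (P : Fin m → Polynomial Fq) (Q : Polynomial Fq),
    Q ∈ S ∧ Q.natDegree = d ∧ Primitive Fq P Q ∧
    vnorm Fq (ratV Fq P 1) < fabs Fq (emb Fq Q) ∧
    vnorm Fq (α - ratV Fq P Q) < (qc Fq) ^ (-(n : ℤ))}

/-- `m_S(n) = min {k ≥ n : S ∩ R_{=k} ≠ ∅}`. -/
noncomputable def mS (S : Set (Polynomial Fq)) (n : ℕ) : ℕ :=
  sInf {k : ℕ | n ≤ k ∧ ∃ Q ∈ S, Q.natDegree = k}

/-- `d_{N,S}(a) = deg_{min,S}(a/N, q^{-deg N})`. -/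
noncomputable def dN (S : Set (Polynomial Fq)) (m : ℕ) (N : Polynomial Fq)
    (a : Fin m → Polynomial Fq) : ℕ :=
  degMin Fq S m N.natDegree (ratV Fq a N)

/-- `R_{<n}^m`, the set of vectors of polynomials of degree `< n`. -/
def polyVecLT (m n : ℕ) : Set (Fin m → Polynomial Fq) :=
  {a | ∀ i, (a i).degree < (n : ℕ)}

/-- The `S`-Farey fractions of degree at most `k` in `K_∞^m` (the zero vector is
included, as the fraction `0/1`). -/
noncomputable def Farey (S : Set (Polynomial Fq)) (m k : ℕ) : Set (Fin m → Kinf Fq) :=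
  {x | ∃ (P : Fin m → Polynomial Fq) (Q : Polynomial Fq), Q ∈ S ∧ Primitive Fq P Q ∧
    vnorm Fq (ratV Fq P 1) < fabs Fq (emb Fq Q) ∧ Q.natDegree ≤ k ∧ x = ratV Fq P Q}

/-- The (closed) ball `B(v, r) = {u ∈ K_∞^m : ‖v - u‖ ≤ r}`. -/
noncomputable def ball {m : ℕ} (v : Fin m → Kinf Fq) (r : NNReal) : Set (Fin m → Kinf Fq) :=
  {u | vnorm Fq (v - u) ≤ r}

/-- `Q` is the (unique monic) `S`-minimal denominator for `(α, q^{-n})`, i.e.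
`Q_{min,S}(α, q^{-n}) = Q`: `Q ∈ S`, `deg Q = deg_{min,S}(α, q^{-n})`, and there is
`P ∈ R^m` with `(P,Q) ∈ R̂^{m+1}` and `‖α - P/Q‖ < q^{-n}`. -/
noncomputable def IsMinDenom (S : Set (Polynomial Fq)) (m n : ℕ) (α : Fin m → Kinf Fq)
    (Q : Polynomial Fq) : Prop :=
  Q ∈ S ∧ Q.natDegree = degMin Fq S m n α ∧
    ∃ P : Fin m → Polynomial Fq, Primitive Fq P Q ∧
      vnorm Fq (α - ratV Fq P Q) < (qc Fq) ^ (-(n : ℤ))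

/-! `|·|` is a non-archimedean absolute value with `|f| = q^{deg f}` on nonzero polynomials, so
two distinct points of `R^m` are at distance `≥ 1` and a closed ball of radius `q⁻¹` contains at
most one of them. For `x = P/Q` with `‖P‖ < |Q|`, the Euclidean quotients `a_i = (N P_i) div Q`
satisfy `N x - a = (N P_i mod Q)/Q`, of norm `≤ q⁻¹`, and `|a_i| ≤ max (|N x_i|, q⁻¹) < |N|`,
so `deg a_i < n`. The second assertion is the ultrametric fact that closed balls of equal radius
are disjoint exactly when their centres are farther apart than the radius, together with
`‖N v‖ = q^n ‖v‖`. -/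

section

variable {F : Type} [Field F] {m : ℕ}

lemma emb_coeff (f : F[X]) (k : ℤ) :
    (emb F f).coeff k = if k ≤ 0 then f.coeff (-k).toNat else 0 := by
  induction f using Polynomial.induction_on' with
  | add p q hp hq =>
    rw [map_add, HahnSeries.coeff_add, hp, hq]
    split_ifs <;> simp
  | monomial n a =>
    have hC : algebraMap F (Kinf F) a = HahnSeries.single (0 : ℤ) a := by
      rw [HahnSeries.algebraMap_apply']
      simp [HahnSeries.ofPowerSeries_C]
    have hmon : emb F (monomial n a) = HahnSeries.single (-(n : ℤ)) a := by
      change Polynomial.aeval _ (monomial n a) = _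
      rw [Polynomial.aeval_monomial, HahnSeries.single_pow, hC, HahnSeries.single_mul_single]
      simp
    rw [hmon, HahnSeries.coeff_single, Polynomial.coeff_monomial]
    split_ifs <;> first | rfl | (exfalso; omega)

lemma emb_coeff_neg_natDegree_ne_zero {f : F[X]} (hf : f ≠ 0) :
    (emb F f).coeff (-(f.natDegree : ℤ)) ≠ 0 := by
  rw [emb_coeff]
  simpa using Polynomial.leadingCoeff_ne_zero.mpr hf

lemma emb_ne_zero {f : F[X]} (hf : f ≠ 0) : emb F f ≠ 0 :=
  fun h => emb_coeff_neg_natDegree_ne_zero hf (by simp [h])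

lemma order_emb {f : F[X]} (hf : f ≠ 0) : (emb F f).order = -(f.natDegree : ℤ) := by
  refine le_antisymm (HahnSeries.order_le_of_coeff_ne_zero (emb_coeff_neg_natDegree_ne_zero hf))
    (not_lt.mp fun hlt => ?_)
  have h0 := HahnSeries.coeff_order_eq_zero.not.mpr (emb_ne_zero hf)
  rw [emb_coeff] at h0
  split_ifs at h0
  · exact h0 (Polynomial.coeff_eq_zero_of_natDegree_lt (by omega))
  · exact h0 rfl

@[simp]
lemma ratV_one_apply (P : Fin m → F[X]) (i : Fin m) : ratV F P 1 i = emb F (P i) := by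
  simp [ratV]

lemma smul_ratV (N : F[X]) (P : Fin m → F[X]) (Q : F[X]) :
    emb F N • ratV F P Q = ratV F (N • P) Q := by
  ext1 i
  simp [ratV, mul_div_assoc]

variable [Fintype F]

lemma one_lt_qc : 1 < qc F := by
  rw [qc]
  exact_mod_cast Fintype.one_lt_card

lemma qc_pos : 0 < qc F := zero_lt_one.trans one_lt_qc

lemma inv_qc_lt_one : (qc F)⁻¹ < 1 := inv_lt_one_of_one_lt₀ one_lt_qc

@[simp]
lemma fabs_zero : fabs F 0 = 0 := if_pos rfl

lemma fabs_one : fabs F 1 = 1 := by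
  simp [fabs]

lemma fabs_mul (α β : Kinf F) : fabs F (α * β) = fabs F α * fabs F β := by
  by_cases hα : α = 0
  · simp [hα]
  by_cases hβ : β = 0
  · simp [hβ]
  rw [fabs, fabs, fabs, if_neg hα, if_neg hβ, if_neg (mul_ne_zero hα hβ),
    HahnSeries.order_mul hα hβ, neg_add, zpow_add₀ qc_pos.ne']

lemma fabs_inv (α : Kinf F) : fabs F α⁻¹ = (fabs F α)⁻¹ := by
  by_cases hα : α = 0
  · simp [hα]
  refine eq_inv_of_mul_eq_one_left ?_
  rw [← fabs_mul, inv_mul_cancel₀ hα, fabs_one]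

lemma fabs_div (α β : Kinf F) : fabs F (α / β) = fabs F α / fabs F β := by
  rw [div_eq_mul_inv, fabs_mul, fabs_inv, div_eq_mul_inv]

lemma fabs_neg (α : Kinf F) : fabs F (-α) = fabs F α := by
  simp [fabs, HahnSeries.order_neg]

lemma fabs_add_le (α β : Kinf F) : fabs F (α + β) ≤ max (fabs F α) (fabs F β) := by
  by_cases h : α + β = 0
  · simp [h]
  by_cases hα : α = 0
  · simp [hα]
  by_cases hβ : β = 0
  · simp [hβ]
  have hmin := HahnSeries.min_order_le_order_add h (x := α) (y := β)
  rw [fabs, fabs, fabs, if_neg h, if_neg hα, if_neg hβ]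
  rcases le_total α.order β.order with hle | hle
  · rw [min_eq_left hle] at hmin
    exact le_max_of_le_left (zpow_le_zpow_right₀ one_lt_qc.le (by omega))
  · rw [min_eq_right hle] at hmin
    exact le_max_of_le_right (zpow_le_zpow_right₀ one_lt_qc.le (by omega))

lemma fabs_emb {f : F[X]} (hf : f ≠ 0) : fabs F (emb F f) = qc F ^ (f.natDegree : ℤ) := by
  rw [fabs, if_neg (emb_ne_zero hf), order_emb hf, neg_neg]

lemma one_le_fabs_emb {f : F[X]} (hf : f ≠ 0) : 1 ≤ fabs F (emb F f) := by
  rw [fabs_emb hf]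
  exact one_le_zpow₀ one_lt_qc.le (by positivity)

lemma degree_lt_of_fabs_emb_lt {f g : F[X]} (h : fabs F (emb F f) < fabs F (emb F g)) :
    f.degree < g.degree := by
  have hg : g ≠ 0 := by
    rintro rfl
    simp at h
  by_cases hf : f = 0
  · simpa [hf, bot_lt_iff_ne_bot] using hg
  rw [fabs_emb hf, fabs_emb hg, zpow_lt_zpow_iff_right₀ one_lt_qc] at h
  exact Polynomial.degree_lt_degree (by exact_mod_cast h)

lemma fabs_emb_div_le_inv_qc {r Q : F[X]} (h : r.degree < Q.degree) :
    fabs F (emb F r / emb F Q) ≤ (qc F)⁻¹ := by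
  by_cases hr : r = 0
  · simp [hr]
  have hQ : Q ≠ 0 := by
    rintro rfl
    simp at h
  have hdeg := Polynomial.natDegree_lt_natDegree hr h
  rw [fabs_div, fabs_emb hr, fabs_emb hQ, ← zpow_sub₀ qc_pos.ne', ← zpow_neg_one]
  exact zpow_le_zpow_right₀ one_lt_qc.le (by omega)

lemma vnorm_le_iff (v : Fin m → Kinf F) (r : ℝ≥0) : vnorm F v ≤ r ↔ ∀ i, fabs F (v i) ≤ r := by
  simp [vnorm, Finset.sup_le_iff]

lemma fabs_le_vnorm (v : Fin m → Kinf F) (i : Fin m) : fabs F (v i) ≤ vnorm F v :=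
  Finset.le_sup (f := fun j => fabs F (v j)) (Finset.mem_univ i)

lemma vnorm_neg (v : Fin m → Kinf F) : vnorm F (-v) = vnorm F v := by
  simp [vnorm, fabs_neg]

lemma vnorm_sub_comm (u v : Fin m → Kinf F) : vnorm F (u - v) = vnorm F (v - u) := by
  rw [← vnorm_neg, neg_sub]

lemma vnorm_add_le (u v : Fin m → Kinf F) : vnorm F (u + v) ≤ max (vnorm F u) (vnorm F v) :=
  (vnorm_le_iff _ _).mpr fun i =>
    (fabs_add_le (u i) (v i)).trans (max_le_max (fabs_le_vnorm u i) (fabs_le_vnorm v i))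

lemma vnorm_smul (c : Kinf F) (v : Fin m → Kinf F) :
    vnorm F (c • v) = fabs F c * vnorm F v := by
  simp only [vnorm, Pi.smul_apply, smul_eq_mul, fabs_mul]
  exact (Finset.apply_sup_eq_sup_comp_of_linearOrder (fabs F c * ·)
    (monotone_mul_left_of_nonneg zero_le) (mul_zero _)).symm

lemma mem_ball_comm {u v : Fin m → Kinf F} {r : ℝ≥0} : u ∈ ball F v r ↔ v ∈ ball F u r := by
  change vnorm F (v - u) ≤ r ↔ vnorm F (u - v) ≤ r
  rw [vnorm_sub_comm]

lemma vnorm_sub_le_of_mem_ball {x y z : Fin m → Kinf F} {r : ℝ≥0} (hx : z ∈ ball F x r)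
    (hy : z ∈ ball F y r) : vnorm F (x - y) ≤ r := by
  rw [show x - y = (x - z) + -(y - z) by abel]
  exact (vnorm_add_le _ _).trans (max_le hx (by rw [vnorm_neg]; exact hy))

lemma disjoint_ball_iff (x y : Fin m → Kinf F) (r : ℝ≥0) :
    Disjoint (ball F x r) (ball F y r) ↔ r < vnorm F (x - y) := by
  refine ⟨fun h => not_le.mp fun hle => Set.not_disjoint_iff.mpr ⟨x, ?_, ?_⟩ h, fun h => ?_⟩
  · simp [ball, vnorm]
  · exact mem_ball_comm.mp hle
  · exact Set.disjoint_left.mpr fun z hx hy => not_le.mpr h (vnorm_sub_le_of_mem_ball hx hy)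

lemma disjoint_ball_smul_iff {c : Kinf F} {n : ℕ} (hc : fabs F c = qc F ^ (n : ℤ))
    (x y : Fin m → Kinf F) :
    Disjoint (ball F x (qc F ^ (-(n + 1 : ℤ)))) (ball F y (qc F ^ (-(n + 1 : ℤ))))
      ↔ Disjoint (ball F (c • x) (qc F)⁻¹) (ball F (c • y) (qc F)⁻¹) := by
  have hscale : (qc F)⁻¹ = qc F ^ (n : ℤ) * qc F ^ (-(n + 1 : ℤ)) := by
    rw [← zpow_add₀ qc_pos.ne']
    simp
  rw [disjoint_ball_iff, disjoint_ball_iff, ← smul_sub, vnorm_smul, hc, hscale,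
    mul_lt_mul_iff_right₀ (zpow_pos qc_pos _)]

lemma vnorm_ratV_lt_one {P : Fin m → F[X]} {Q : F[X]}
    (h : vnorm F (ratV F P 1) < fabs F (emb F Q)) : vnorm F (ratV F P Q) < 1 := by
  have hratV : ratV F P Q = (emb F Q)⁻¹ • ratV F P 1 := by
    ext1 i
    simp [ratV, div_eq_inv_mul]
  rw [hratV, vnorm_smul, fabs_inv, inv_mul_lt_one₀ (zero_le.trans_lt h)]
  exact h

lemma ratV_div_mem_ball (P : Fin m → F[X]) {Q : F[X]} (hQ : Q ≠ 0) :
    ratV F (fun i => P i / Q) 1 ∈ ball F (ratV F P Q) (qc F)⁻¹ := by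
  have hQe := emb_ne_zero (F := F) hQ
  refine (vnorm_le_iff _ _).mpr fun i => ?_
  have hrem : ratV F P Q i - emb F (P i / Q) = emb F (P i % Q) / emb F Q := by
    rw [ratV, eq_div_iff hQe, sub_mul, div_mul_cancel₀ _ hQe, ← map_mul, ← map_sub,
      ← EuclideanDomain.div_add_mod (P i) Q]
    simp [EuclideanDomain.mod_eq_sub_mul_div, mul_comm]
  simpa [hrem] using fabs_emb_div_le_inv_qc (Polynomial.degree_mod_lt (P i) hQ)

lemma eq_of_mem_ball_inv_qc {a b : Fin m → F[X]} {v : Fin m → Kinf F}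
    (ha : ratV F a 1 ∈ ball F v (qc F)⁻¹) (hb : ratV F b 1 ∈ ball F v (qc F)⁻¹) : a = b := by
  ext1 i
  by_contra hab
  have hi := (fabs_le_vnorm _ i).trans
    (vnorm_sub_le_of_mem_ball (mem_ball_comm.mp ha) (mem_ball_comm.mp hb))
  rw [Pi.sub_apply, ratV_one_apply, ratV_one_apply, ← map_sub] at hi
  exact (one_le_fabs_emb (sub_ne_zero.mpr hab)).not_gt (hi.trans_lt inv_qc_lt_one)

lemma mem_polyVecLT_of_mem_ball {n : ℕ} {N : F[X]} (hN : N.degree = n) {x : Fin m → Kinf F}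
    (hx : vnorm F x < 1) {a : Fin m → F[X]} (ha : ratV F a 1 ∈ ball F (emb F N • x) (qc F)⁻¹) :
    a ∈ polyVecLT F m n := by
  have hN0 : N ≠ 0 := by
    rintro rfl
    simp at hN
  have hNpos : 0 < fabs F (emb F N) := zero_lt_one.trans_le (one_le_fabs_emb hN0)
  intro i
  rw [← hN]
  refine degree_lt_of_fabs_emb_lt ?_
  have hNx : fabs F ((emb F N • x) i) < fabs F (emb F N) := by
    rw [Pi.smul_apply, smul_eq_mul, fabs_mul]
    exact mul_lt_of_lt_one_right hNpos ((fabs_le_vnorm x i).trans_lt hx)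
  have hdist : fabs F ((emb F N • x) i - emb F (a i)) < fabs F (emb F N) := by
    have := (fabs_le_vnorm _ i).trans ha
    rw [Pi.sub_apply, ratV_one_apply] at this
    exact this.trans_lt (inv_qc_lt_one.trans_le (one_le_fabs_emb hN0))
  calc fabs F (emb F (a i))
      = fabs F ((emb F N • x) i + -((emb F N • x) i - emb F (a i))) := by
        rw [neg_sub, add_sub_cancel]
    _ ≤ max (fabs F ((emb F N • x) i)) (fabs F ((emb F N • x) i - emb F (a i))) := by
        rw [← fabs_neg ((emb F N • x) i - _)]
        exact fabs_add_le _ _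
    _ < fabs F (emb F N) := max_lt hNx hdist

end

theorem stmt16 (S : Set (Polynomial Fq))
    (m n k : ℕ)
    (N : Polynomial Fq) (hN : N.degree = (n : WithBot ℕ))
    (x : Fin m → Kinf Fq) (hx : x ∈ Farey Fq S m k) :
    (∃! a : Fin m → Polynomial Fq,
      a ∈ polyVecLT Fq m n ∧ ratV Fq a 1 ∈ ball Fq (emb Fq N • x) (qc Fq)⁻¹) ∧
    (∀ y ∈ Farey Fq S m k,
      (Disjoint (ball Fq x ((qc Fq) ^ (-(n + 1 : ℤ)))) (ball Fq y ((qc Fq) ^ (-(n + 1 : ℤ))))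
        ↔ Disjoint (ball Fq (emb Fq N • x) (qc Fq)⁻¹) (ball Fq (emb Fq N • y) (qc Fq)⁻¹))) := by
  have hN0 : N ≠ 0 := by
    rintro rfl
    simp at hN
  have hNabs : fabs Fq (emb Fq N) = qc Fq ^ (n : ℤ) := by
    rw [fabs_emb hN0, natDegree_eq_of_degree_eq_some hN]
  refine ⟨?_, fun y _ => disjoint_ball_smul_iff hNabs x y⟩
  obtain ⟨P, Q, -, -, hPQ, -, rfl⟩ := hx
  have hQ : Q ≠ 0 := by
    rintro rfl
    simp at hPQ
  have ha := ratV_div_mem_ball (N • P) hQ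
  rw [← smul_ratV] at ha
  exact ⟨_, ⟨mem_polyVecLT_of_mem_ball hN (vnorm_ratV_lt_one hPQ) ha, ha⟩,
    fun b hb => eq_of_mem_ball_inv_qc hb.2 ha⟩
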